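/- arXiv:1711.07715 — 2 statements merged into one kernel-verified Lean document; each statement's English description precedes it below -/
import Mathlib

section
/- Let ((Y_i, B_i))_{i∈ℕ} be an i.i.d. sequence of pairs of real random variables on a probability space (Ω, F, P) such that Y₀ is integrable, each B_i takes values in {0,1}, and p := P(B₀ = 1) > 0. Then for every n ≥ 1, E[ R_n · 1_{∑_{i<n} B_i > 0} ] = (E[Y₀B₀]/p) · P(∑_{i<n} B_i > 0), where R_n = (∑_{i<n} Y_i B_i)/(∑_{i<n} B_i). Consequently, the bias of the ratio estimator on the event that it is defined equals Δ = E[Y₀B₀]/p − E[Y₀] = Cov(Y₀, B₀)/p, which vanishes if and only if Y₀ and B₀ are uncorrelated. (Finite-sample, pointwise version of Proposition A.1 on the bias of the classical estimator μ̂(t).) -/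
/-!
If `B j = 1` then `∑_{i<n} B_i = 1 + ∑_{i≠j} B_i`, so on the event `{∑ B > 0}` the ratio estimator
is `∑_j Y_j B_j w_j` and its indicator is `∑_j B_j w_j`, with the leave-one-out weight
`w_j = (1 + ∑_{i≠j} B_i)⁻¹` independent of `(Y_j, B_j)`. Taking expectations, both become a
first moment of `(Y₀, B₀)` times the same factor `∑_j E[w_j]`:
`E[R_n 1_{∑ B > 0}] = E[Y₀B₀] ∑_j E[w_j]` and `P(∑ B > 0) = p ∑_j E[w_j]`.
-/

open MeasureTheory ProbabilityTheory Finset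

section LeaveOneOut

variable {ι : Type*} [DecidableEq ι] {s : Finset ι} {b : ι → ℝ}

theorem mul_ite_inv_sum_eq_mul_inv_one_add_sum_erase (hb : ∀ i ∈ s, b i = 0 ∨ b i = 1)
    {j : ι} (hj : j ∈ s) :
    b j * (if 0 < ∑ i ∈ s, b i then (∑ i ∈ s, b i)⁻¹ else 0)
      = b j * (1 + ∑ i ∈ s.erase j, b i)⁻¹ := by
  have hrest : 0 ≤ ∑ i ∈ s.erase j, b i := sum_nonneg fun i hi => by
    rcases hb i (mem_of_mem_erase hi) with h | h <;> simp [h]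
  rcases hb j hj with h | h
  · simp [h]
  · have hsum : ∑ i ∈ s, b i = 1 + ∑ i ∈ s.erase j, b i := by rw [← add_sum_erase s b hj, h]
    rw [hsum, if_pos (by positivity)]

theorem ite_sum_mul_div_sum_eq_sum_mul_inv_one_add_sum_erase (a : ι → ℝ)
    (hb : ∀ i ∈ s, b i = 0 ∨ b i = 1) :
    (if 0 < ∑ i ∈ s, b i then (∑ i ∈ s, a i * b i) / ∑ i ∈ s, b i else 0)
      = ∑ j ∈ s, a j * b j * (1 + ∑ i ∈ s.erase j, b i)⁻¹ := by
  have hsplit : (if 0 < ∑ i ∈ s, b i then (∑ i ∈ s, a i * b i) / ∑ i ∈ s, b i else 0)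
      = ∑ j ∈ s, a j * (b j * if 0 < ∑ i ∈ s, b i then (∑ i ∈ s, b i)⁻¹ else 0) := by
    split_ifs
    · simp only [div_eq_mul_inv, sum_mul, mul_assoc]
    · simp
  rw [hsplit]
  refine sum_congr rfl fun j hj => ?_
  rw [mul_ite_inv_sum_eq_mul_inv_one_add_sum_erase hb hj, mul_assoc]

theorem ite_pos_sum_eq_sum_mul_inv_one_add_sum_erase (hb : ∀ i ∈ s, b i = 0 ∨ b i = 1) :
    (if 0 < ∑ i ∈ s, b i then (1 : ℝ) else 0)
      = ∑ j ∈ s, b j * (1 + ∑ i ∈ s.erase j, b i)⁻¹ := by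
  have h := ite_sum_mul_div_sum_eq_sum_mul_inv_one_add_sum_erase 1 hb
  simp only [Pi.one_apply, one_mul] at h
  rw [← h]
  split_ifs with hpos
  · exact (div_self hpos.ne').symm
  · rfl

end LeaveOneOut

section Independence

variable {Ω ι : Type*} [MeasurableSpace Ω] {μ : Measure Ω}
  {X : ι → Ω → ℝ × ℝ}

theorem ProbabilityTheory.iIndepFun.indepFun_inv_one_add_sum_snd (hmeas : ∀ i, Measurable (X i))
    (hindep : iIndepFun X μ) {t : Finset ι} {j : ι} (hj : j ∉ t) :
    IndepFun (X j) (fun ω => (1 + ∑ i ∈ t, (X i ω).2)⁻¹) μ := by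
  have h := (hindep.indepFun_finsetSum_of_notMem hmeas hj).symm.comp measurable_id
    (ψ := fun q : ℝ × ℝ => (1 + q.2)⁻¹) (measurable_const.add measurable_snd).inv
  simpa only [Function.comp_def, id_eq, Finset.sum_apply, Prod.snd_sum] using h

theorem integral_sum_mul_inv_one_add_sum_erase [DecidableEq ι] (hmeas : ∀ i, Measurable (X i))
    (hindep : iIndepFun X μ) {i₀ : ι} (hident : ∀ i, IdentDistrib (X i) (X i₀) μ μ)
    (hnonneg : ∀ i ω, 0 ≤ (X i ω).2) {f : ℝ × ℝ → ℝ} (hf : Measurable f)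
    (hint : Integrable (fun ω => f (X i₀ ω)) μ) (s : Finset ι) :
    ∫ ω, ∑ j ∈ s, f (X j ω) * (1 + ∑ i ∈ s.erase j, (X i ω).2)⁻¹ ∂μ
      = (∫ ω, f (X i₀ ω) ∂μ) * ∑ j ∈ s, ∫ ω, (1 + ∑ i ∈ s.erase j, (X i ω).2)⁻¹ ∂μ := by
  have hweight_meas : ∀ j, Measurable fun ω => (1 + ∑ i ∈ s.erase j, (X i ω).2)⁻¹ :=
    fun j => (measurable_const.add (Finset.measurable_sum _ fun i _ => (hmeas i).snd)).inv
  have hweight_le : ∀ j ω, ‖(1 + ∑ i ∈ s.erase j, (X i ω).2)⁻¹‖ ≤ 1 := fun j ω => by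
    have : 0 ≤ ∑ i ∈ s.erase j, (X i ω).2 := sum_nonneg fun i _ => hnonneg i ω
    rw [Real.norm_of_nonneg (by positivity)]
    exact inv_le_one_of_one_le₀ (by linarith)
  have hfX : ∀ j, IdentDistrib (fun ω => f (X j ω)) (fun ω => f (X i₀ ω)) μ μ :=
    fun j => (hident j).comp hf
  rw [integral_finsetSum _ fun j _ => ((hfX j).integrable_iff.mpr hint).mul_bdd
    (hweight_meas j).aestronglyMeasurable (ae_of_all _ (hweight_le j)), mul_sum]
  refine sum_congr rfl fun j _ => ?_
  have hindep_j := (hindep.indepFun_inv_one_add_sum_snd hmeas (notMem_erase j s)).comp hf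
    measurable_id
  rw [← (hfX j).integral_eq]
  exact hindep_j.integral_mul_eq_mul_integral (hf.comp (hmeas j)).aestronglyMeasurable
    (hweight_meas j).aestronglyMeasurable

end Independence

theorem integral_eq_measureReal_of_eq_zero_or_one {Ω : Type*} [MeasurableSpace Ω] {μ : Measure Ω}
    {f : Ω → ℝ} (hf : Measurable f) (h01 : ∀ ω, f ω = 0 ∨ f ω = 1) :
    ∫ ω, f ω ∂μ = μ.real {ω | f ω = 1} := by
  have hf_eq : f = Set.indicator {ω | f ω = 1} 1 := funext fun ω => by
    rcases h01 ω with h | h <;> simp [h]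
  conv_lhs => rw [hf_eq]
  exact integral_indicator_one (hf (measurableSet_singleton 1))

/-- Finite-sample, pointwise version of Proposition A.1 on the bias of the
classical estimator: for an i.i.d. sequence of pairs `(Y_i, B_i)` with `Y₀`
integrable, `B_i ∈ {0,1}` and `p := P(B₀ = 1) > 0`, for every `n ≥ 1`,
`E[R_n · 1_{∑_{i<n} B_i > 0}] = (E[Y₀B₀]/p) · P(∑_{i<n} B_i > 0)`.
Consequently the bias on the event that `R_n` is defined equals
`Δ = E[Y₀B₀]/p − E[Y₀] = Cov(Y₀,B₀)/p`, which vanishes iff `Y₀` and `B₀` are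
uncorrelated. -/
theorem ratio_estimator_bias {Ω : Type*} [MeasureSpace Ω]
    [IsProbabilityMeasure (ℙ : Measure Ω)]
    (Y B : ℕ → Ω → ℝ)
    (hmeas : ∀ i, Measurable fun ω => (Y i ω, B i ω))
    (hindep : iIndepFun (fun i ω => (Y i ω, B i ω)) ℙ)
    (hident : ∀ i, IdentDistrib (fun ω => (Y i ω, B i ω)) (fun ω => (Y 0 ω, B 0 ω)) ℙ ℙ)
    (hint : Integrable (Y 0))
    (h01 : ∀ i, ∀ ω, B i ω = 0 ∨ B i ω = 1)
    (hp : 0 < ℙ {ω | B 0 ω = 1}) :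
    (∀ n ≥ 1,
      (∫ ω, if 0 < ∑ i ∈ Finset.range n, B i ω then
          (∑ i ∈ Finset.range n, Y i ω * B i ω) / ∑ i ∈ Finset.range n, B i ω
        else 0)
        = ((∫ ω', Y 0 ω' * B 0 ω') / (ℙ {ω' | B 0 ω' = 1}).toReal)
          * (ℙ {ω | 0 < ∑ i ∈ Finset.range n, B i ω}).toReal) ∧
      (∫ ω', Y 0 ω' * B 0 ω') / (ℙ {ω' | B 0 ω' = 1}).toReal - (∫ ω', Y 0 ω')
        = ((∫ ω', Y 0 ω' * B 0 ω') - (∫ ω', Y 0 ω') * ∫ ω', B 0 ω')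
          / (ℙ {ω' | B 0 ω' = 1}).toReal ∧
      ((∫ ω', Y 0 ω' * B 0 ω') / (ℙ {ω' | B 0 ω' = 1}).toReal - (∫ ω', Y 0 ω') = 0 ↔
        (∫ ω', Y 0 ω' * B 0 ω') - (∫ ω', Y 0 ω') * ∫ ω', B 0 ω' = 0) := by
  set p := (ℙ {ω | B 0 ω = 1}).toReal
  have hnonneg : ∀ i ω, 0 ≤ B i ω := fun i ω => by rcases h01 i ω with h | h <;> simp [h]
  have hB0_meas : Measurable (B 0) := measurable_snd.comp (hmeas 0)
  have hEB : ∫ ω, B 0 ω = p := integral_eq_measureReal_of_eq_zero_or_one hB0_meas (h01 0)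
  have hp_ne : p ≠ 0 := (ENNReal.toReal_pos hp.ne' (measure_ne_top _ _)).ne'
  refine ⟨fun n _ => ?_, by rw [hEB]; field_simp,
    by rw [hEB, sub_eq_zero, div_eq_iff hp_ne, sub_eq_zero]⟩
  have hB_bdd : ∀ ω, ‖B 0 ω‖ ≤ 1 := fun ω => by rcases h01 0 ω with h | h <;> simp [h]
  have hnum := integral_sum_mul_inv_one_add_sum_erase (X := fun i ω => (Y i ω, B i ω)) hmeas
    hindep hident hnonneg (f := fun x => x.1 * x.2) (measurable_fst.mul measurable_snd)
    (hint.mul_bdd hB0_meas.aestronglyMeasurable (ae_of_all _ hB_bdd)) (Finset.range n)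
  have hden := integral_sum_mul_inv_one_add_sum_erase (X := fun i ω => (Y i ω, B i ω)) hmeas
    hindep hident hnonneg measurable_snd
    (Integrable.of_bound hB0_meas.aestronglyMeasurable 1 (ae_of_all _ hB_bdd)) (Finset.range n)
  have hSpos_meas : MeasurableSet {ω | 0 < ∑ i ∈ Finset.range n, B i ω} :=
    (Finset.measurable_sum _ fun i _ => measurable_snd.comp (hmeas i)) measurableSet_Ioi
  rw [← measureReal_def, ← integral_indicator_one hSpos_meas]
  simp only [Set.indicator_apply, Set.mem_ofPred_eq, Pi.one_apply,
    ite_sum_mul_div_sum_eq_sum_mul_inv_one_add_sum_erase _ fun i _ => h01 i _,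
    ite_pos_sum_eq_sum_mul_inv_one_add_sum_erase fun i _ => h01 i _, hnum, hden, hEB]
  field_simp
end

section
/- Let (Ω, F, P) be a probability space, let d < t₀ be real numbers, and let X : Ω × ℝ → ℝ be jointly measurable such that: for every ω the function z ↦ X(ω,z) is differentiable on an open interval containing [d,t₀]; there is an integrable g : Ω → ℝ with |∂_z X(ω,z)| ≤ g(ω) for all z ∈ [d,t₀] and all ω; ω ↦ X(ω,d) is integrable; and (z,ω) ↦ ∂_z X(ω,z) is jointly measurable. Let O : [d,t₀] × Ω → {0,1} be jointly measurable with p(z) := P(O(z,·) = 1) > 0 for all z ∈ [d,t₀], and suppose that for each z ∈ [d,t₀] the random variables ω ↦ ∂_z X(ω,z) and ω ↦ O(z,ω) are independent. Then E[X(·,t₀)] = ∫_d^{t₀} E[∂_z X(·,z) · O(z,·)] / p(z) dz + E[X(·,d)]; that is, the population target of the FTC mean estimator — built from the observed-sample mean of the derivatives and the fully observed value at d — equals the true mean at t₀, even though X itself may be dependent on the observation process O. (Population-level identity underlying the mean part of Theorem 1 under Violation (V).) -/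
open MeasureTheory ProbabilityTheory Filter Set intervalIntegral

/-!
Observation is independent of the derivative at each point, so the inverse-propensity weight
turns `E[∂_z X(·,z) · O(z,·)] / p(z)` back into `E[∂_z X(·,z)]`: the possible dependence of `X`
itself on `O` never enters. The identity then reduces to the fundamental theorem of calculus
along each sample path, with the integrable envelope of the derivative justifying Fubini.
-/

section InversePropensity

variable {Ω : Type*} [MeasurableSpace Ω] {μ : Measure Ω}

lemma integral_eq_measureReal_of_mem_zero_one {O : Ω → ℝ} (hO : Measurable O)
    (h01 : ∀ ω, O ω = 0 ∨ O ω = 1) : ∫ ω, O ω ∂μ = μ.real {ω | O ω = 1} := by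
  have hO_ind : O = {ω | O ω = 1}.indicator 1 := by
    funext ω
    rcases h01 ω with h | h <;> simp [h]
  conv_lhs => rw [hO_ind]
  exact integral_indicator_one (hO (measurableSet_singleton 1))

lemma integral_mul_div_measureReal_eq_integral_of_indepFun [IsFiniteMeasure μ] {Y O : Ω → ℝ}
    (hY : AEStronglyMeasurable Y μ) (hO : Measurable O) (h01 : ∀ ω, O ω = 0 ∨ O ω = 1)
    (hobs : μ {ω | O ω = 1} ≠ 0) (hind : IndepFun Y O μ) :
    (∫ ω, Y ω * O ω ∂μ) / μ.real {ω | O ω = 1} = ∫ ω, Y ω ∂μ := by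
  rw [hind.integral_fun_mul_eq_mul_integral hY hO.aestronglyMeasurable,
    integral_eq_measureReal_of_mem_zero_one hO h01,
    mul_div_cancel_right₀ _ ((measureReal_ne_zero_iff).2 hobs)]

end InversePropensity

section MeanFTC

variable {Ω : Type*} [MeasurableSpace Ω] {μ : Measure Ω} {X : Ω → ℝ → ℝ} {a b : ℝ} {g : Ω → ℝ}

lemma integral_deriv_eq_sub_of_abs_le {f : ℝ → ℝ} {C : ℝ}
    (hdiff : ∀ z ∈ uIcc a b, DifferentiableAt ℝ f z) (hbd : ∀ z ∈ uIcc a b, |deriv f z| ≤ C) :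
    ∫ z in a..b, deriv f z = f b - f a := by
  refine integral_deriv_eq_sub hdiff ?_
  refine (intervalIntegrable_const (c := C)).mono_fun' (measurable_deriv f).aestronglyMeasurable ?_
  refine (ae_restrict_iff' measurableSet_uIoc).2 (Eventually.of_forall fun z hz => ?_)
  exact hbd z (uIoc_subset_uIcc hz)

lemma integrable_deriv_uncurry [SFinite μ] (hg : Integrable g μ)
    (hbd : ∀ ω, ∀ z ∈ uIcc a b, |deriv (X ω) z| ≤ g ω)
    (hmeas : Measurable fun p : ℝ × Ω => deriv (X p.2) p.1) :
    Integrable (fun p : ℝ × Ω => deriv (X p.2) p.1) ((volume.restrict (uIoc a b)).prod μ) := by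
  have : IsFiniteMeasure (volume.restrict (uIoc a b)) :=
    isFiniteMeasure_restrict.2 measure_Ioc_lt_top.ne
  refine (hg.comp_snd _).mono' hmeas.aestronglyMeasurable ?_
  have hmem : ∀ᵐ p ∂(volume.restrict (uIoc a b)).prod μ, p.1 ∈ uIoc a b :=
    Measure.quasiMeasurePreserving_fst.ae (ae_restrict_mem measurableSet_uIoc)
  filter_upwards [hmem] with p hp
  exact hbd p.2 p.1 (uIoc_subset_uIcc hp)

theorem integral_eq_intervalIntegral_integral_deriv_add [SFinite μ]
    (hdiff : ∀ ω, ∀ z ∈ uIcc a b, DifferentiableAt ℝ (X ω) z) (hg : Integrable g μ)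
    (hbd : ∀ ω, ∀ z ∈ uIcc a b, |deriv (X ω) z| ≤ g ω)
    (hmeas : Measurable fun p : ℝ × Ω => deriv (X p.2) p.1)
    (hXa : Integrable (fun ω => X ω a) μ) :
    ∫ ω, X ω b ∂μ = (∫ z in a..b, ∫ ω, deriv (X ω) z ∂μ) + ∫ ω, X ω a ∂μ := by
  have hint := integrable_deriv_uncurry hg hbd hmeas
  have hpath_int : Integrable (fun ω => ∫ z in a..b, deriv (X ω) z) μ := by
    simp_rw [intervalIntegral_eq_integral_uIoc]
    exact hint.integral_prod_right.smul (if a ≤ b then (1 : ℝ) else -1)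
  rw [intervalIntegral_integral_swap hint, ← integral_add hpath_int hXa]
  refine integral_congr_ae (Eventually.of_forall fun ω => ?_)
  simp only [integral_deriv_eq_sub_of_abs_le (hdiff ω) (hbd ω), sub_add_cancel]

end MeanFTC

theorem ftc_mean_population_identity_general {Ω : Type*} [MeasureSpace Ω]
    [IsProbabilityMeasure (ℙ : Measure Ω)]
    (d t₀ : ℝ) (hdt : d < t₀) (X : Ω → ℝ → ℝ)
    (c e : ℝ) (hcd : c < d) (hte : t₀ < e)
    (hdiff : ∀ ω, ∀ z ∈ Set.Ioo c e, DifferentiableAt ℝ (X ω) z)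
    (g : Ω → ℝ) (hg : Integrable g)
    (hX'bd : ∀ ω, ∀ z ∈ Set.Icc d t₀, |deriv (X ω) z| ≤ g ω)
    (hXd : Integrable fun ω => X ω d)
    (hX'meas : Measurable fun p : ℝ × Ω => deriv (X p.2) p.1)
    (O : ℝ → Ω → ℝ)
    (hOmeas : Measurable fun p : ℝ × Ω => O p.1 p.2)
    (hO01 : ∀ z ∈ Set.Icc d t₀, ∀ ω, O z ω = 0 ∨ O z ω = 1)
    (hp : ∀ z ∈ Set.Icc d t₀, 0 < ℙ {ω | O z ω = 1})
    (hindep : ∀ z ∈ Set.Icc d t₀, IndepFun (fun ω => deriv (X ω) z) (O z)) :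
    (∫ ω, X ω t₀) =
      (∫ z in d..t₀, (∫ ω, deriv (X ω) z * O z ω) / (ℙ {ω | O z ω = 1}).toReal)
        + ∫ ω, X ω d := by
  have hIcc : uIcc d t₀ = Icc d t₀ := uIcc_of_le hdt.le
  have hdiff' : ∀ ω, ∀ z ∈ uIcc d t₀, DifferentiableAt ℝ (X ω) z := fun ω z hz => by
    rw [hIcc] at hz
    exact hdiff ω z ⟨hcd.trans_le hz.1, hz.2.trans_lt hte⟩
  rw [integral_eq_intervalIntegral_integral_deriv_add hdiff' hg (hIcc ▸ hX'bd) hX'meas hXd]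
  congr 1
  refine integral_congr fun z hz => ?_
  rw [hIcc] at hz
  exact (integral_mul_div_measureReal_eq_integral_of_indepFun
    (hX'meas.comp measurable_prodMk_left).aestronglyMeasurable
    (hOmeas.comp measurable_prodMk_left) (hO01 z hz) (hp z hz).ne' (hindep z hz)).symm

/-- Population-level identity underlying the mean part of Theorem 1 under
Violation (V): for a jointly measurable process `X` with differentiable sample
paths on an open interval containing `[d,t₀]`, pathwise derivative dominated by
an integrable envelope, `X(·,d)` integrable, and an observation indicator
process `O` with values in `{0,1}`, observation probabilities
`p(z) = P(O(z,·) = 1) > 0`, such that for each `z ∈ [d,t₀]` the derivative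
`∂_z X(·,z)` is independent of `O(z,·)`, one has
`E[X(·,t₀)] = ∫_d^{t₀} E[∂_z X(·,z)·O(z,·)]/p(z) dz + E[X(·,d)]`. -/
theorem ftc_mean_population_identity {Ω : Type*} [MeasureSpace Ω]
    [IsProbabilityMeasure (ℙ : Measure Ω)]
    (d t₀ : ℝ) (hdt : d < t₀) (X : Ω → ℝ → ℝ)
    (hXmeas : Measurable fun p : Ω × ℝ => X p.1 p.2)
    (c e : ℝ) (hcd : c < d) (hte : t₀ < e)
    (hdiff : ∀ ω, ∀ z ∈ Set.Ioo c e, DifferentiableAt ℝ (X ω) z)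
    (g : Ω → ℝ) (hg : Integrable g)
    (hX'bd : ∀ ω, ∀ z ∈ Set.Icc d t₀, |deriv (X ω) z| ≤ g ω)
    (hXd : Integrable fun ω => X ω d)
    (hX'meas : Measurable fun p : ℝ × Ω => deriv (X p.2) p.1)
    (O : ℝ → Ω → ℝ)
    (hOmeas : Measurable fun p : ℝ × Ω => O p.1 p.2)
    (hO01 : ∀ z ∈ Set.Icc d t₀, ∀ ω, O z ω = 0 ∨ O z ω = 1)
    (hp : ∀ z ∈ Set.Icc d t₀, 0 < ℙ {ω | O z ω = 1})
    (hindep : ∀ z ∈ Set.Icc d t₀, IndepFun (fun ω => deriv (X ω) z) (O z)) :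
    (∫ ω, X ω t₀) =
      (∫ z in d..t₀, (∫ ω, deriv (X ω) z * O z ω) / (ℙ {ω | O z ω = 1}).toReal)
        + ∫ ω, X ω d :=
  ftc_mean_population_identity_general d t₀ hdt X c e hcd hte hdiff g hg hX'bd hXd hX'meas O hOmeas
    hO01 hp hindep
end
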